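/- arXiv:1512.08179 — 2 statements merged into one kernel-verified Lean document; each statement's English description precedes it below -/
import Mathlib

section
/- Let n ≥ 2 be an integer and ν_1 = 0, ν_2, ..., ν_n ≥ 0 integers. Define ψ_n(x) = ∫_{(0,∞)^{n−1}} exp(−∑_{j=1}^{n−1} r_j² − x²/(r_1²···r_{n−1}²)) · ∏_{j=1}^{n−1} r_j^{2ν_j−2ν_n−1} dr_1···dr_{n−1} for x > 0. Then the Mellin transform ∫_0^∞ ψ_n(x) x^{s−1} dx equals 2^{−n} ∏_{j=1}^{n} Γ(ν_j − ν_n + s/2) for all real s > 2ν_n − 2 min_j ν_j, so that all Gamma arguments are positive. -/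
open Real Set MeasureTheory

lemma aux_integrableOn {a : ℝ} (ha : -1 < a) :
    IntegrableOn (fun t : ℝ => t ^ a * Real.exp (-t ^ 2)) (Ioi 0) := by
  simpa using integrableOn_rpow_mul_exp_neg_mul_sq one_pos ha

lemma aux_int_val {a : ℝ} (ha : -1 < a) :
    ∫ t in Ioi (0:ℝ), t ^ a * Real.exp (-t ^ 2) = (1/2) * Real.Gamma ((a+1)/2) := by
  have := integral_rpow_mul_exp_neg_rpow (p := 2) two_pos ha
  simp_rw [Real.rpow_two] at this
  rw [this]

lemma aux_int_val_b {b q : ℝ} (hb : 0 < b) (hq : -1 < q) :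
    ∫ x in Ioi (0:ℝ), x ^ q * Real.exp (-b * x ^ 2) =
      b ^ (-(q+1)/2) * (1/2) * Real.Gamma ((q+1)/2) := by
  have := integral_rpow_mul_exp_neg_mul_rpow (p := 2) two_pos hq hb
  simp_rw [Real.rpow_two] at this
  rw [this]

variable {m : ℕ}

lemma octant_measurable : MeasurableSet {r : Fin m → ℝ | ∀ j, 0 < r j} := by
  have : {r : Fin m → ℝ | ∀ j, 0 < r j} = ⋂ j, (fun r : Fin m → ℝ => r j) ⁻¹' Ioi 0 := by
    ext r; simp [Set.mem_iInter]
  rw [this]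
  exact MeasurableSet.iInter fun j => (measurable_pi_apply j) measurableSet_Ioi

lemma octant_indicator (f : Fin m → ℝ → ℝ) :
    Set.indicator {r : Fin m → ℝ | ∀ j, 0 < r j} (fun r => ∏ j, f j (r j)) =
      fun r => ∏ j, Set.indicator (Ioi 0) (f j) (r j) := by
  funext r
  by_cases hr : r ∈ {r : Fin m → ℝ | ∀ j, 0 < r j}
  · rw [Set.indicator_of_mem hr]
    exact (Finset.prod_congr rfl fun j _ => (Set.indicator_of_mem (hr j) _).symm)
  · rw [Set.indicator_of_notMem hr]
    obtain ⟨j, hj⟩ := not_forall.mp hr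
    exact (Finset.prod_eq_zero (Finset.mem_univ j)
      (Set.indicator_of_notMem (show r j ∉ Ioi 0 by simpa using hj) _)).symm

lemma octant_integrable {f : Fin m → ℝ → ℝ} (hf : ∀ j, IntegrableOn (f j) (Ioi 0)) :
    IntegrableOn (fun r : Fin m → ℝ => ∏ j, f j (r j)) {r | ∀ j, 0 < r j} := by
  rw [← integrable_indicator_iff octant_measurable, octant_indicator]
  exact Integrable.fintype_prod fun j => (integrable_indicator_iff measurableSet_Ioi).mpr (hf j)

lemma octant_integral (f : Fin m → ℝ → ℝ) :
    ∫ r in {r : Fin m → ℝ | ∀ j, 0 < r j}, ∏ j, f j (r j) = ∏ j, ∫ t in Ioi 0, f j t := by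
  rw [← integral_indicator octant_measurable, octant_indicator,
    MeasureTheory.integral_fintype_prod_volume_eq_prod
      (f := fun j => Set.indicator (Ioi 0) (f j))]
  exact Finset.prod_congr rfl fun j _ => integral_indicator measurableSet_Ioi

theorem mellin_of_psi (n : ℕ) (hn : 2 ≤ n) (ν : ℕ → ℕ) (hν1 : ν 1 = 0) (s : ℝ)
    (hs : ∀ j ∈ Finset.Icc 1 n, 0 < (ν j : ℝ) - (ν n : ℝ) + s / 2) :
    ∫ x in Set.Ioi (0 : ℝ),
        (∫ r in {r : Fin (n - 1) → ℝ | ∀ j, 0 < r j},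
          Real.exp (-(∑ j, (r j) ^ 2) - x ^ 2 / ∏ j, (r j) ^ 2) *
            ∏ j : Fin (n - 1), (r j) ^ (2 * (ν (j + 1) : ℝ) - 2 * (ν n : ℝ) - 1)) *
          x ^ (s - 1) =
      2 ^ (-(n : ℝ)) * ∏ j ∈ Finset.Icc 1 n, Real.Gamma ((ν j : ℝ) - (ν n : ℝ) + s / 2) := by
  -- notation
  set S : Set (Fin (n-1) → ℝ) := {r | ∀ j, 0 < r j} with hSdef
  set c : Fin (n-1) → ℝ := fun j => 2 * (ν (j + 1) : ℝ) - 2 * (ν n : ℝ) - 1 with hcdef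
  have hs0 : 0 < s := by
    have := hs n (Finset.mem_Icc.mpr ⟨by omega, le_refl n⟩)
    simp only [sub_self, zero_add] at this
    linarith
  have hc : ∀ j : Fin (n-1), -1 < c j + s := by
    intro j
    have hj : (j : ℕ) + 1 ∈ Finset.Icc 1 n := Finset.mem_Icc.mpr ⟨by omega, by
      have := j.isLt; omega⟩
    have := hs ((j : ℕ) + 1) hj
    simp only [hcdef]
    linarith
  set f : Fin (n-1) → ℝ → ℝ := fun j t => t ^ (c j + s) * Real.exp (-t ^ 2) with hfdef
  have hfInt : ∀ j, IntegrableOn (f j) (Ioi 0) := fun j => aux_integrableOn (hc j)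
  set G : ℝ → (Fin (n-1) → ℝ) → ℝ := fun x r =>
    Real.exp (-(∑ j, (r j) ^ 2) - x ^ 2 / ∏ j, (r j) ^ 2) *
      (∏ j : Fin (n - 1), (r j) ^ (c j)) * x ^ (s - 1) with hGdef
  -- pointwise factorization of G for r in the octant
  have hpt : ∀ r ∈ S, ∀ x : ℝ, G x r =
      (Real.exp (-(∑ j, (r j) ^ 2)) * ∏ j : Fin (n-1), (r j) ^ (c j)) *
        (x ^ (s - 1) * Real.exp (-(∏ j, (r j) ^ 2)⁻¹ * x ^ 2)) := by
    intro r hr x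
    have hP : (0:ℝ) < ∏ j, (r j) ^ 2 := Finset.prod_pos fun j _ => pow_pos (hr j) 2
    have : -(∑ j, (r j) ^ 2) - x ^ 2 / ∏ j, (r j) ^ 2 =
        -(∑ j, (r j) ^ 2) + (-(∏ j, (r j) ^ 2)⁻¹ * x ^ 2) := by
      rw [div_eq_mul_inv]; ring
    rw [hGdef]
    simp only
    rw [this, Real.exp_add]
    ring
  -- positivity of G on the domain
  have hGpos : ∀ r ∈ S, ∀ x ∈ Ioi (0:ℝ), 0 < G x r := by
    intro r hr x hx
    exact mul_pos (mul_pos (Real.exp_pos _)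
      (Finset.prod_pos fun j _ => Real.rpow_pos_of_pos (hr j) _))
      (Real.rpow_pos_of_pos hx _)
  -- value of the inner x-integral
  have hval : ∀ r ∈ S, ∫ x in Ioi (0:ℝ), G x r =
      (1/2) * Real.Gamma (s/2) * ∏ j, f j (r j) := by
    intro r hr
    have hP : (0:ℝ) < ∏ j, (r j) ^ 2 := Finset.prod_pos fun j _ => pow_pos (hr j) 2
    rw [setIntegral_congr_fun measurableSet_Ioi (fun x _ => hpt r hr x)]
    rw [integral_const_mul, aux_int_val_b (inv_pos.mpr hP) (by linarith : (-1:ℝ) < s - 1)]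
    have h1 : s - 1 + 1 = s := by ring
    rw [h1]
    have h2 : ((∏ j, (r j) ^ 2)⁻¹ : ℝ) ^ (-s/2) = ∏ j : Fin (n-1), (r j) ^ s := by
      rw [show (-s/2 : ℝ) = -(s/2) by ring, Real.inv_rpow hP.le, Real.rpow_neg hP.le, inv_inv,
        ← Real.finset_prod_rpow _ _ (fun j _ => sq_nonneg (r j))]
      exact Finset.prod_congr rfl fun j _ => by
        rw [← Real.rpow_natCast (r j) 2, ← Real.rpow_mul (hr j).le]
        congr 1
        push_cast
        ring
    rw [h2, hfdef]
    have h3 : ∀ j : Fin (n-1), (r j) ^ (c j + s) * Real.exp (-(r j) ^ 2) =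
        (r j) ^ (c j) * (r j) ^ s * Real.exp (-(r j) ^ 2) := fun j => by
      rw [Real.rpow_add (hr j)]
    simp only [h3, Finset.prod_mul_distrib]
    rw [← Real.exp_sum]
    have h4 : (∑ j : Fin (n-1), -(r j) ^ 2) = -(∑ j : Fin (n-1), (r j) ^ 2) := by
      rw [Finset.sum_neg_distrib]
    rw [h4]
    ring
  -- measurability
  have hGmeas : Measurable (Function.uncurry G) := by
    rw [hGdef]
    unfold Function.uncurry
    fun_prop
  -- integrability on the product measure
  have hInt : Integrable (Function.uncurry G)
      ((volume.restrict (Ioi (0:ℝ))).prod (volume.restrict S)) := by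
    rw [integrable_prod_iff' hGmeas.aestronglyMeasurable]
    constructor
    · filter_upwards [ae_restrict_mem octant_measurable] with r hr
      have heq : (fun x => Function.uncurry G (x, r)) = fun x =>
          (Real.exp (-(∑ j, (r j) ^ 2)) * ∏ j : Fin (n-1), (r j) ^ (c j)) *
            (x ^ (s - 1) * Real.exp (-(∏ j, (r j) ^ 2)⁻¹ * x ^ 2)) :=
        funext fun x => hpt r hr x
      rw [heq]
      have hP : (0:ℝ) < ∏ j, (r j) ^ 2 := Finset.prod_pos fun j _ => pow_pos (hr j) 2
      exact (integrableOn_rpow_mul_exp_neg_mul_sq (inv_pos.mpr hP)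
        (by linarith : (-1:ℝ) < s - 1)).const_mul _
    · apply Integrable.congr ((octant_integrable hfInt).const_mul ((1/2) * Real.Gamma (s/2)))
      filter_upwards [ae_restrict_mem octant_measurable] with r hr
      have hnorm : ∫ x in Ioi (0:ℝ), ‖G x r‖ = ∫ x in Ioi (0:ℝ), G x r :=
        setIntegral_congr_fun measurableSet_Ioi fun x hx =>
          Real.norm_of_nonneg (hGpos r hr x hx).le
      exact (hval r hr).symm.trans hnorm.symm
  -- main computation
  have step1 : (∫ x in Set.Ioi (0 : ℝ),
        (∫ r in S,
          Real.exp (-(∑ j, (r j) ^ 2) - x ^ 2 / ∏ j, (r j) ^ 2) *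
            ∏ j : Fin (n - 1), (r j) ^ (c j)) * x ^ (s - 1)) =
      ∫ x in Ioi (0:ℝ), ∫ r in S, G x r := by
    refine setIntegral_congr_fun measurableSet_Ioi fun x _ => ?_
    simp only [hGdef]
    rw [integral_mul_const]
  rw [step1, integral_integral_swap hInt,
    setIntegral_congr_fun octant_measurable (fun r hr => hval r hr),
    integral_const_mul, octant_integral]
  have hvals : ∀ j : Fin (n-1), ∫ t in Ioi (0:ℝ), f j t =
      (1/2) * Real.Gamma ((ν ((j:ℕ) + 1) : ℝ) - (ν n : ℝ) + s/2) := by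
    intro j
    rw [hfdef]
    simp only
    rw [aux_int_val (hc j)]
    congr 1
    rw [hcdef]
    ring
  rw [Finset.prod_congr rfl fun j _ => hvals j]
  -- final algebra
  have hn1 : n - 1 + 1 = n := by omega
  set F : ℕ → ℝ := fun j => Real.Gamma ((ν j : ℝ) - (ν n : ℝ) + s / 2) with hF
  have hsplit : ∏ j ∈ Finset.Icc 1 n, F j = (∏ j ∈ Finset.Icc 1 (n-1), F j) * F n := by
    rw [show Finset.Icc 1 n = Finset.Icc 1 (n-1+1) by rw [hn1],
      Finset.prod_Icc_succ_top (by omega), hn1]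
  have hFn : F n = Real.Gamma (s/2) := by
    rw [hF]
    simp only
    rw [show (ν n : ℝ) - (ν n : ℝ) + s/2 = s/2 by ring]
  have hreindex : ∏ j ∈ Finset.Icc 1 (n-1), F j =
      ∏ j : Fin (n-1), F ((j:ℕ) + 1) := by
    rw [← Finset.Ico_add_one_right_eq_Icc, Finset.prod_Ico_eq_prod_range,
      Fin.prod_univ_eq_prod_range (fun j => F (j + 1)) (n-1)]
    rw [show n - 1 + 1 - 1 = n - 1 by omega]
    exact Finset.prod_congr rfl fun j _ => by rw [add_comm]
  have hprodF : ∏ j : Fin (n-1), ((1/2) * Real.Gamma ((ν ((j:ℕ) + 1) : ℝ) - (ν n : ℝ) + s/2)) =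
      (1/2 : ℝ)^(n-1) * ∏ j : Fin (n-1), F ((j:ℕ) + 1) := by
    rw [Finset.prod_mul_distrib, Finset.prod_const, Finset.card_univ, Fintype.card_fin]
  have h2n : (2:ℝ) ^ (-(n:ℝ)) = (1/2 : ℝ)^(n-1) * (1/2) := by
    rw [Real.rpow_neg (by norm_num), Real.rpow_natCast, ← pow_succ, hn1, one_div, inv_pow]
  rw [hprodF, hsplit, hFn, hreindex, h2n]
  ring
end

section
/- Fix integer n ≥ 2 and z ≠ 0. The Hessian matrix of S(r_1,...,r_{n−1}) = ∑_j log(1+r_j²) + log(1+|z|²/(r_1²···r_{n−1}²)) at the critical point r_1 = ··· = r_{n−1} = |z|^{1/n} has off-diagonal entries 4/(1+|z|^{2/n})² and diagonal entries 8/(1+|z|^{2/n})², and its determinant equals 4^{n−1}·n/(1+|z|^{2/n})^{2(n−1)}. -/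
/-!
With `P = ∏ r_l²` one has `∂_j P = 2P / r_j`, hence
`∂_j S = 2r_j / (1 + r_j²) - 2A / (r_j (P + A))` where `A = |z|²`.
Differentiating once more and evaluating at `r_l = a = |z|^{1/n}`, where `A = a² P`, gives
`4 / (1 + a²)²` off the diagonal and `8 / (1 + a²)²` on it. The Hessian is therefore `c (I + J)`
with `J` the all-ones matrix, and the matrix determinant lemma gives `det (I + J) = n`.
-/

open Real Finset Filter Topology

section

variable {m : ℕ}

/-- The function `S` of the statement, with `A = |z|²`. -/
noncomputable def potential (A : ℝ) (r : Fin m → ℝ) : ℝ :=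
  ∑ l, log (1 + r l ^ 2) + log (1 + A / ∏ l, r l ^ 2)

noncomputable def partialPotential (A : ℝ) (r : Fin m → ℝ) (j : Fin m) : ℝ :=
  2 * r j / (1 + r j ^ 2) - 2 * A / (r j * (∏ l, r l ^ 2 + A))

lemma differentiableAt_prod_sq (r : Fin m → ℝ) :
    DifferentiableAt ℝ (fun r : Fin m → ℝ => ∏ l, r l ^ 2) r := by
  fun_prop

lemma fderiv_prod_sq_apply_single {r : Fin m → ℝ} {j : Fin m} (hj : r j ≠ 0) :
    fderiv ℝ (fun r : Fin m → ℝ => ∏ l, r l ^ 2) r (Pi.single j 1) =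
      2 * (∏ l, r l ^ 2) / r j := by
  have h := HasFDerivAt.finsetProd (u := univ) fun l _ =>
    (hasFDerivAt_apply (𝕜 := ℝ) (F' := fun _ => ℝ) l r).pow 2
  rw [h.fderiv, ← mul_prod_erase univ (fun l => r l ^ 2) (mem_univ j)]
  simp only [Nat.add_one_sub_one, pow_one, nsmul_eq_mul, Nat.cast_ofNat, _root_.sum_apply,
    smul_apply, ContinuousLinearMap.proj_apply, Pi.single_apply, smul_eq_mul,
    mul_ite, mul_one, mul_zero, sum_ite_eq', mem_univ, ↓reduceIte]
  field_simp

lemma fderiv_potential_apply_single {A : ℝ} (hA : 0 ≤ A) {r : Fin m → ℝ} (hr : ∀ l, r l ≠ 0)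
    (j : Fin m) : fderiv ℝ (potential A) r (Pi.single j 1) = partialPotential A r j := by
  have hP : 0 < ∏ l, r l ^ 2 := prod_pos fun l _ => by positivity [hr l]
  have hsum := HasFDerivAt.fun_sum (u := univ) fun l _ =>
    (((hasFDerivAt_apply l r).pow 2).const_add 1).log (by positivity)
  have hquot := ((hasDerivAt_const (∏ l, r l ^ 2) A).fun_div (hasDerivAt_id' _)
    hP.ne').comp_hasFDerivAt r (differentiableAt_prod_sq r).hasFDerivAt
  have hS : HasFDerivAt (potential A) _ r :=
    hsum.add ((hquot.const_add 1).log (by simp only [Function.comp_apply]; positivity))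
  rw [hS.fderiv]
  simp only [Nat.add_one_sub_one, pow_one, nsmul_eq_mul, Nat.cast_ofNat, Function.comp_apply,
    zero_mul, mul_one, zero_sub, add_apply, _root_.sum_apply,
    smul_apply, ContinuousLinearMap.proj_apply, Pi.single_apply, smul_eq_mul,
    mul_ite, mul_zero, sum_ite_eq', mem_univ, ↓reduceIte, fderiv_prod_sq_apply_single (hr j),
    partialPotential]
  field_simp
  ring

lemma fderiv_potential_apply_single_eventuallyEq {A : ℝ} (hA : 0 ≤ A) {r₀ : Fin m → ℝ}
    (hr₀ : ∀ l, r₀ l ≠ 0) (j : Fin m) :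
    (fun r => fderiv ℝ (potential A) r (Pi.single j 1)) =ᶠ[𝓝 r₀]
      fun r => partialPotential A r j := by
  have hnz : ∀ᶠ r in 𝓝 r₀, ∀ l, r l ≠ 0 :=
    eventually_all.2 fun l => (continuous_apply l).continuousAt.eventually_ne (hr₀ l)
  filter_upwards [hnz] with r hr using fderiv_potential_apply_single hA hr j

lemma fderiv_partialPotential_apply_single {A : ℝ} (hA : 0 ≤ A) {r : Fin m → ℝ}
    (hr : ∀ l, r l ≠ 0) (i j : Fin m) :
    fderiv ℝ (fun r => partialPotential A r j) r (Pi.single i 1) =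
      (if i = j then
          2 * (1 - r j ^ 2) / (1 + r j ^ 2) ^ 2 + 2 * A / (r j ^ 2 * (∏ l, r l ^ 2 + A))
        else 0) + 4 * A * (∏ l, r l ^ 2) / (r i * r j * (∏ l, r l ^ 2 + A) ^ 2) := by
  have hP : 0 < ∏ l, r l ^ 2 := prod_pos fun l _ => by positivity [hr l]
  have hj := hasFDerivAt_apply (𝕜 := ℝ) (F' := fun _ => ℝ) j r
  have hfirst := (((hasDerivAt_id' (r j)).const_mul 2).fun_div
    (((hasDerivAt_id' (r j)).pow 2).const_add 1)
    (by simp only [Pi.pow_apply]; positivity)).comp_hasFDerivAt r hj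
  have hsecond := ((hasDerivAt_const (r j * (∏ l, r l ^ 2 + A)) (2 * A)).fun_div
    (hasDerivAt_id' _) (mul_ne_zero (hr j) (by positivity))).comp_hasFDerivAt r
    (hj.mul ((differentiableAt_prod_sq r).hasFDerivAt.add_const A))
  have h : HasFDerivAt (fun r => partialPotential A r j) _ r := hfirst.sub hsecond
  rw [h.fderiv]
  simp only [mul_one, Pi.pow_apply, Nat.cast_ofNat, Nat.add_one_sub_one, pow_one, zero_mul,
    zero_sub, smul_add, add_apply, sub_apply, smul_apply, ContinuousLinearMap.proj_apply,
    Pi.single_apply, smul_eq_mul, mul_ite, mul_zero, fderiv_prod_sq_apply_single (hr i)]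
  rcases eq_or_ne i j with rfl | hij
  · simp only [↓reduceIte]
    field_simp
    ring
  · simp only [hij, Ne.symm hij, ↓reduceIte, add_zero, zero_add, zero_sub]
    field_simp
    ring

lemma fderiv_fderiv_potential_apply_single_const {a : ℝ} (ha : 0 < a) (i j : Fin m) :
    fderiv ℝ (fun r => fderiv ℝ (potential ((a ^ 2) ^ (m + 1))) r (Pi.single j 1)) (fun _ => a)
      (Pi.single i 1) = (if i = j then 8 else 4) / (1 + a ^ 2) ^ 2 := by
  have hA : (0 : ℝ) ≤ (a ^ 2) ^ (m + 1) := by positivity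
  rw [(fderiv_potential_apply_single_eventuallyEq hA (fun _ => ha.ne') j).fderiv_eq,
    fderiv_partialPotential_apply_single hA (fun _ => ha.ne')]
  simp only [prod_const, card_univ, Fintype.card_fin, ← pow_mul]
  split_ifs <;> field_simp <;> ring

end

lemma Matrix.det_smul_one_add_ones {ι R : Type*} [Fintype ι] [DecidableEq ι] [CommRing R] (c : R) :
    (c • (1 + Matrix.of fun _ _ : ι => (1 : R))).det =
      c ^ Fintype.card ι * (Fintype.card ι + 1) := by
  have h : (Matrix.of fun _ _ : ι => (1 : R)) =
      Matrix.replicateCol Unit (fun _ : ι => (1 : R)) *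
        Matrix.replicateRow Unit (fun _ : ι => (1 : R)) := by
    ext; simp [Matrix.mul_apply]
  rw [Matrix.det_smul, h, Matrix.det_one_add_replicateCol_mul_replicateRow, add_comm 1]
  simp [dotProduct]

lemma sq_eq_rpow_one_div_sq_pow {x : ℝ} (hx : 0 ≤ x) {n : ℕ} (hn : n ≠ 0) :
    x ^ 2 = ((x ^ ((1 : ℝ) / n)) ^ 2) ^ n := by
  rw [← pow_mul, mul_comm, pow_mul, one_div, Real.rpow_inv_natCast_pow hx hn]

lemma rpow_one_div_sq {x : ℝ} (hx : 0 ≤ x) (y : ℝ) : (x ^ (1 / y)) ^ 2 = x ^ (2 / y) := by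
  rw [← Real.rpow_mul_natCast hx]
  ring_nf

theorem hessian_of_S_at_saddle (n : ℕ) (hn : 2 ≤ n) (z : ℂ) (hz : z ≠ 0) :
    (∀ i j : Fin (n - 1),
      fderiv ℝ
        (fun r : Fin (n - 1) → ℝ =>
          fderiv ℝ
            (fun r' : Fin (n - 1) → ℝ =>
              (∑ l, Real.log (1 + (r' l) ^ 2)) +
                Real.log (1 + ‖z‖ ^ 2 / ∏ l, (r' l) ^ 2))
            r (Pi.single j 1))
        (fun _ => ‖z‖ ^ ((1 : ℝ) / n)) (Pi.single i 1) =
      (if i = j then 8 else 4) / (1 + ‖z‖ ^ (2 / (n : ℝ))) ^ 2) ∧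
    (Matrix.of fun i j : Fin (n - 1) =>
        ((if i = j then 8 else 4) : ℝ) / (1 + ‖z‖ ^ (2 / (n : ℝ))) ^ 2).det =
      4 ^ (n - 1) * n / (1 + ‖z‖ ^ (2 / (n : ℝ))) ^ (2 * (n - 1)) := by
  have hn' : n - 1 + 1 = n := Nat.sub_add_cancel (by omega)
  refine ⟨fun i j => ?_, ?_⟩
  · have h := fderiv_fderiv_potential_apply_single_const
      (Real.rpow_pos_of_pos (norm_pos_iff.2 hz) ((1 : ℝ) / n)) i j
    rwa [hn', ← sq_eq_rpow_one_div_sq_pow (norm_nonneg z) (by omega),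
      rpow_one_div_sq (norm_nonneg z)] at h
  · have hM : (Matrix.of fun i j : Fin (n - 1) =>
          ((if i = j then 8 else 4) : ℝ) / (1 + ‖z‖ ^ (2 / (n : ℝ))) ^ 2) =
        (4 / (1 + ‖z‖ ^ (2 / (n : ℝ))) ^ 2) • (1 + Matrix.of fun _ _ => 1) := by
      ext i j
      simp only [Matrix.of_apply, Matrix.smul_apply, Matrix.add_apply, Matrix.one_apply, smul_eq_mul]
      split_ifs <;> ring
    rw [hM, Matrix.det_smul_one_add_ones, Fintype.card_fin, ← Nat.cast_add_one, hn', pow_mul,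
      div_pow]
    ring
end
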